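/- For 1/2 < α < 1 and c = α/(1−α), the weighted-mean complexity term satisfies: c·C^{S,α}(x,z) + c·C^{S,α}(y,z) − z − (c−1)·(i₁ + i₂) ≥ C^{S,α}(x,y) whenever x, y, z ≥ 0, 0 ≤ i₁ ≤ min(x,z), 0 ≤ i₂ ≤ min(y,z), where C^{S,α}(a,b) = α·min(a,b) + (1−α)·max(a,b). Consequently D^{S,α} satisfies the relaxed triangle inequality D^{S,α}(X,Y) ≤ (α/(1−α))·(D^{S,α}(X,Z) + D^{S,α}(Y,Z)). -/

import Mathlib

open Real

/-- Shannon entropy of a discrete random variable `X` on a finite probability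
space with weights `p`. -/
noncomputable def ent {Ω S : Type*} [Fintype Ω] [Fintype S] [DecidableEq S]
    (p : Ω → ℝ) (X : Ω → S) : ℝ :=
  ∑ s : S, Real.negMulLog (∑ ω ∈ Finset.univ.filter (fun ω => X ω = s), p ω)

/-- Conditional entropy `H(X|Y) = H(X,Y) - H(Y)`. -/
noncomputable def condEnt {Ω S T : Type*} [Fintype Ω] [Fintype S] [Fintype T]
    [DecidableEq S] [DecidableEq T] (p : Ω → ℝ) (X : Ω → S) (Y : Ω → T) : ℝ :=
  ent p (fun ω => (X ω, Y ω)) - ent p Y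

/-- Mutual information `I(X;Y) = H(X) + H(Y) - H(X,Y)`. -/
noncomputable def mutualInfo {Ω S T : Type*} [Fintype Ω] [Fintype S] [Fintype T]
    [DecidableEq S] [DecidableEq T] (p : Ω → ℝ) (X : Ω → S) (Y : Ω → T) : ℝ :=
  ent p X + ent p Y - ent p (fun ω => (X ω, Y ω))

/-- The complexity term `C^{S,α}(a,b) = α·min(a,b) + (1-α)·max(a,b)`. -/
noncomputable def Cs (α a b : ℝ) : ℝ := α * min a b + (1 - α) * max a b

/-- The divergence `D^{S,α}`. -/
noncomputable def DS {Ω S T : Type*} [Fintype Ω] [Fintype S] [Fintype T]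
    [DecidableEq S] [DecidableEq T] (α : ℝ) (p : Ω → ℝ) (X : Ω → S) (Y : Ω → T) : ℝ :=
  Cs α (ent p X) (ent p Y) - mutualInfo p X Y

/-!
Write the entropy of `W` as `H(W) = -∑ ω, p ω * log P_W(W ω)`, where `P_W` is the law of `W`.
Coarse-graining `W` only enlarges the fibre masses, so it cannot increase entropy. Submodularity
`H(X,Y,Z) + H(Z) ≤ H(X,Z) + H(Y,Z)` is Gibbs' inequality for the ratio
`r = P_{XZ} P_{YZ} / (P_{XYZ} P_Z)` of the law making `X` and `Y` conditionally independent given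
`Z` to the joint law: `∑ p log r ≤ ∑ p r - ∑ p ≤ 0`. Together they give
`I(X;Z) ≤ min(H(X), H(Z))` and `I(X;Z) + I(Y;Z) - H(Z) ≤ I(X;Y)`, so the relaxed triangle
inequality for `D^{S,α}` follows from the numerical one, which becomes linear after multiplying
by `1 - α`.
-/

open Finset

lemma sum_mul_log_le_sum_mul_sub_sum {ι : Type*} [Fintype ι] {p r : ι → ℝ}
    (hp0 : ∀ i, 0 ≤ p i) (hr : ∀ i, 0 < p i → 0 < r i) :
    ∑ i, p i * Real.log (r i) ≤ ∑ i, p i * r i - ∑ i, p i := by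
  rw [← sum_sub_distrib]
  refine sum_le_sum fun i _ => ?_
  rcases (hp0 i).eq_or_lt with h | h
  · simp [← h]
  · nlinarith [Real.log_le_sub_one_of_pos (hr i h)]

section Law

variable {Ω S T U : Type*} [Fintype Ω] [DecidableEq S] [DecidableEq T] [DecidableEq U]
  (p : Ω → ℝ)

noncomputable def law (W : Ω → S) (s : S) : ℝ :=
  ∑ ω ∈ univ.filter (fun ω => W ω = s), p ω

lemma sum_mul_comp_eq_sum_law [Fintype S] (W : Ω → S) (g : S → ℝ) :
    ∑ ω, p ω * g (W ω) = ∑ s, law p W s * g s := by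
  rw [← sum_fiberwise univ W]
  refine sum_congr rfl fun s _ => ?_
  rw [law, sum_mul]
  exact sum_congr rfl fun ω hω => by rw [(mem_filter.1 hω).2]

lemma sum_law [Fintype S] (W : Ω → S) : ∑ s, law p W s = ∑ ω, p ω := by
  simpa using (sum_mul_comp_eq_sum_law p W fun _ => 1).symm

lemma sum_law_prod_fst [Fintype T] (Y : Ω → T) (Z : Ω → U) (u : U) :
    ∑ t, law p (fun ω => (Y ω, Z ω)) (t, u) = law p Z u := by
  simp only [law, sum_filter, Prod.mk.injEq, ite_and]
  rw [sum_comm]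
  simp

lemma ent_eq_neg_sum_mul_log_law [Fintype S] (W : Ω → S) :
    ent p W = -∑ ω, p ω * Real.log (law p W (W ω)) := by
  rw [sum_mul_comp_eq_sum_law p W fun s => Real.log (law p W s)]
  simp [ent, law, Real.negMulLog]

variable {p}

lemma law_nonneg (hp0 : ∀ ω, 0 ≤ p ω) (W : Ω → S) (s : S) : 0 ≤ law p W s :=
  sum_nonneg fun ω _ => hp0 ω

lemma law_pos (hp0 : ∀ ω, 0 ≤ p ω) (W : Ω → S) {ω : Ω} (hω : 0 < p ω) :
    0 < law p W (W ω) :=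
  hω.trans_le (single_le_sum (fun ω _ => hp0 ω) (by simp))

lemma law_le_law_comp (hp0 : ∀ ω, 0 ≤ p ω) (W : Ω → S) (f : S → T) (s : S) :
    law p W s ≤ law p (fun ω => f (W ω)) (f s) :=
  sum_le_sum_of_subset_of_nonneg (fun ω => by simp_all) (fun ω _ _ => hp0 ω)

end Law

section Entropy

variable {Ω S T U : Type*} [Fintype Ω] [Fintype S] [Fintype T] [Fintype U]
  [DecidableEq S] [DecidableEq T] [DecidableEq U] {p : Ω → ℝ}

lemma ent_comp_le (hp0 : ∀ ω, 0 ≤ p ω) (W : Ω → S) (f : S → T) :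
    ent p (fun ω => f (W ω)) ≤ ent p W := by
  rw [ent_eq_neg_sum_mul_log_law, ent_eq_neg_sum_mul_log_law, neg_le_neg_iff]
  refine sum_le_sum fun ω _ => ?_
  rcases (hp0 ω).eq_or_lt with h | h
  · simp [← h]
  · exact mul_le_mul_of_nonneg_left
      (Real.log_le_log (law_pos hp0 W h) (law_le_law_comp hp0 W f _)) h.le

lemma sum_law_mul_law_div_law_le (hp0 : ∀ ω, 0 ≤ p ω) (X : Ω → S) (Y : Ω → T)
    (Z : Ω → U) :
    ∑ v : S × T × U, law p (fun ω => (X ω, Z ω)) (v.1, v.2.2) *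
      law p (fun ω => (Y ω, Z ω)) (v.2.1, v.2.2) / law p Z v.2.2 ≤ ∑ ω, p ω := by
  simp only [Fintype.sum_prod_type]
  calc _ = ∑ x, ∑ z, law p (fun ω => (X ω, Z ω)) (x, z) *
          (∑ y, law p (fun ω => (Y ω, Z ω)) (y, z)) / law p Z z := by
        refine sum_congr rfl fun x _ => ?_
        rw [sum_comm]
        simp only [mul_sum, sum_div]
    _ ≤ ∑ x, ∑ z, law p (fun ω => (X ω, Z ω)) (x, z) := by
        gcongr with x _ z _
        rw [sum_law_prod_fst]
        exact div_le_of_le_mul₀ (law_nonneg hp0 Z z) (law_nonneg hp0 _ _) le_rfl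
    _ = ∑ ω, p ω := by rw [← Fintype.sum_prod_type', sum_law]

lemma ent_submodular (hp0 : ∀ ω, 0 ≤ p ω) (X : Ω → S) (Y : Ω → T) (Z : Ω → U) :
    ent p (fun ω => (X ω, Y ω, Z ω)) + ent p Z
      ≤ ent p (fun ω => (X ω, Z ω)) + ent p (fun ω => (Y ω, Z ω)) := by
  set W : Ω → S × T × U := fun ω => (X ω, Y ω, Z ω)
  set G : S × T × U → ℝ := fun v =>
    law p (fun ω => (X ω, Z ω)) (v.1, v.2.2) * law p (fun ω => (Y ω, Z ω)) (v.2.1, v.2.2) /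
      (law p W v * law p Z v.2.2)
  have hlog : ∑ ω, p ω * Real.log (G (W ω)) = ent p W + ent p Z
      - (ent p (fun ω => (X ω, Z ω)) + ent p (fun ω => (Y ω, Z ω))) := by
    simp only [ent_eq_neg_sum_mul_log_law, ← sum_neg_distrib, ← sum_add_distrib,
      ← sum_sub_distrib]
    refine sum_congr rfl fun ω _ => ?_
    rcases (hp0 ω).eq_or_lt with h | h
    · simp [← h]
    · have hb := law_pos hp0 (fun ω => (X ω, Z ω)) h
      have hc := law_pos hp0 (fun ω => (Y ω, Z ω)) h
      have ha := law_pos hp0 W h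
      have hd := law_pos hp0 Z h
      change p ω * Real.log (_ * _ / (_ * _)) = _
      rw [Real.log_div (by positivity) (by positivity), Real.log_mul hb.ne' hc.ne',
        Real.log_mul ha.ne' hd.ne']
      ring
  have hmass : ∑ ω, p ω * G (W ω) ≤ ∑ ω, p ω := by
    refine (sum_mul_comp_eq_sum_law p W G).trans_le
      (le_trans (sum_le_sum fun v _ => ?_) (sum_law_mul_law_div_law_le hp0 X Y Z))
    rcases (law_nonneg hp0 W v).eq_or_lt with h | h
    · rw [← h, zero_mul]
      exact div_nonneg (mul_nonneg (law_nonneg hp0 _ _) (law_nonneg hp0 _ _))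
        (law_nonneg hp0 _ _)
    · exact le_of_eq (by simp only [G]; field_simp)
  have hpos : ∀ ω, 0 < p ω → 0 < G (W ω) := fun ω h => by
    have := law_pos hp0 (fun ω => (X ω, Z ω)) h
    have := law_pos hp0 (fun ω => (Y ω, Z ω)) h
    have := law_pos hp0 W h
    have := law_pos hp0 Z h
    positivity
  linarith [sum_mul_log_le_sum_mul_sub_sum hp0 hpos]

lemma mutualInfo_le_min (hp0 : ∀ ω, 0 ≤ p ω) (X : Ω → S) (Z : Ω → U) :
    mutualInfo p X Z ≤ min (ent p X) (ent p Z) := by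
  have hX : ent p X ≤ ent p (fun ω => (X ω, Z ω)) :=
    ent_comp_le hp0 (fun ω => (X ω, Z ω)) Prod.fst
  have hZ : ent p Z ≤ ent p (fun ω => (X ω, Z ω)) :=
    ent_comp_le hp0 (fun ω => (X ω, Z ω)) Prod.snd
  exact le_min (by unfold mutualInfo; linarith) (by unfold mutualInfo; linarith)

lemma mutualInfo_add_mutualInfo_le (hp0 : ∀ ω, 0 ≤ p ω) (X : Ω → S) (Y : Ω → T)
    (Z : Ω → U) :
    mutualInfo p X Z + mutualInfo p Y Z ≤ mutualInfo p X Y + ent p Z := by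
  have hXY : ent p (fun ω => (X ω, Y ω)) ≤ ent p (fun ω => (X ω, Y ω, Z ω)) :=
    ent_comp_le hp0 (fun ω => (X ω, Y ω, Z ω)) fun v => (v.1, v.2.1)
  have := ent_submodular hp0 X Y Z
  unfold mutualInfo
  linarith

end Entropy

lemma Cs_eq (α a b : ℝ) : Cs α a b = (1 - α) * (a + b) + (2 * α - 1) * min a b := by
  rw [Cs, ← min_add_max a b]
  ring

lemma min_add_min_add_min_le (x y z : ℝ) : min x y + min x z + min y z ≤ x + y + z := by
  rcases le_total x z with h | h
  · linarith [min_eq_left h, min_le_right x y, min_le_right y z]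
  · linarith [min_eq_right h, min_le_left x y, min_le_left y z]

lemma Cs_le_of_le_min {α x y z i₁ i₂ : ℝ} (hα : 1 / 2 ≤ α) (hα1 : α < 1)
    (hi₁ : i₁ ≤ min x z) (hi₂ : i₂ ≤ min y z) :
    Cs α x y ≤ (α / (1 - α)) * Cs α x z + (α / (1 - α)) * Cs α y z - z -
      ((α / (1 - α)) - 1) * (i₁ + i₂) := by
  have h1α : 0 < 1 - α := by linarith
  have hgap : (1 - α) * ((α / (1 - α)) * Cs α x z + (α / (1 - α)) * Cs α y z - z -
        ((α / (1 - α)) - 1) * (i₁ + i₂)) - (1 - α) * Cs α x y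
      = (2 * α - 1) * ((1 - α) * (x + y + z - (min x y + min x z + min y z))
        + (min x z - i₁) + (min y z - i₂)) := by
    simp only [Cs_eq]
    field_simp
    ring
  have hnonneg : 0 ≤ (2 * α - 1) * ((1 - α) * (x + y + z - (min x y + min x z + min y z))
      + (min x z - i₁) + (min y z - i₂)) := by
    refine mul_nonneg (by linarith) (add_nonneg (add_nonneg ?_ (sub_nonneg.2 hi₁))
      (sub_nonneg.2 hi₂))
    exact mul_nonneg h1α.le (sub_nonneg.2 (min_add_min_add_min_le x y z))
  rw [← mul_le_mul_iff_of_pos_left h1α]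
  linarith

theorem DS_relaxed_triangle_general {Ω S T U : Type*} [Fintype Ω] [Fintype S] [Fintype T]
    [Fintype U] [DecidableEq S] [DecidableEq T] [DecidableEq U]
    (p : Ω → ℝ) (hp0 : ∀ ω, 0 ≤ p ω)
    (α : ℝ) (hα : 1 / 2 < α) (hα1 : α < 1)
    (X : Ω → S) (Y : Ω → T) (Z : Ω → U) :
    (∀ x y z i₁ i₂ : ℝ, 0 ≤ x → 0 ≤ y → 0 ≤ z →
        0 ≤ i₁ → i₁ ≤ min x z → 0 ≤ i₂ → i₂ ≤ min y z →
        (α / (1 - α)) * Cs α x z + (α / (1 - α)) * Cs α y z - z -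
          ((α / (1 - α)) - 1) * (i₁ + i₂) ≥ Cs α x y) ∧
      DS α p X Y ≤ (α / (1 - α)) * (DS α p X Z + DS α p Y Z) := by
  refine ⟨fun _ _ _ _ _ _ _ _ _ hi₁ _ hi₂ => Cs_le_of_le_min hα.le hα1 hi₁ hi₂, ?_⟩
  have hC := Cs_le_of_le_min hα.le hα1 (mutualInfo_le_min hp0 X Z) (mutualInfo_le_min hp0 Y Z)
  have hI := mutualInfo_add_mutualInfo_le hp0 X Y Z
  unfold DS
  linarith

theorem DS_relaxed_triangle {Ω S T U : Type*} [Fintype Ω] [Fintype S] [Fintype T]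
    [Fintype U] [DecidableEq S] [DecidableEq T] [DecidableEq U]
    (p : Ω → ℝ) (hp0 : ∀ ω, 0 ≤ p ω) (hp1 : ∑ ω, p ω = 1)
    (α : ℝ) (hα : 1 / 2 < α) (hα1 : α < 1)
    (X : Ω → S) (Y : Ω → T) (Z : Ω → U) :
    (∀ x y z i₁ i₂ : ℝ, 0 ≤ x → 0 ≤ y → 0 ≤ z →
        0 ≤ i₁ → i₁ ≤ min x z → 0 ≤ i₂ → i₂ ≤ min y z →
        (α / (1 - α)) * Cs α x z + (α / (1 - α)) * Cs α y z - z -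
          ((α / (1 - α)) - 1) * (i₁ + i₂) ≥ Cs α x y) ∧
      DS α p X Y ≤ (α / (1 - α)) * (DS α p X Z + DS α p Y Z) :=
  DS_relaxed_triangle_general p hp0 α hα hα1 X Y Z
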